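/- arXiv:2603.13135 — 5 statements merged into one kernel-verified Lean document; each statement's English description precedes it below -/
import Mathlib

section
/- Let π = Σᵢ wᵢ πᵢ, μ ≪ π with KL(μ‖π) < ∞, and let λ*, μᵢ be as in the canonical decomposition. Let C := {Σᵢ λᵢ πᵢ : λ ∈ Δₘ} denote the convex hull of the components. Then inf_{π̃ ∈ C} KL(μ‖π̃) ≤ Σᵢ λ*ᵢ KL(μᵢ‖πᵢ) = KL(μ‖π) − KL(λ*‖w). -/
open MeasureTheory ENNReal Classical

/-- Relative entropy `KL(μ‖ν) := ∫ log (dμ/dν) dμ` if `μ ≪ ν` (and the integral is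
well-defined), `+∞` otherwise. -/
noncomputable def klDiv {X : Type*} [MeasurableSpace X] (μ ν : Measure X) : ℝ≥0∞ :=
  if μ ≪ ν ∧ Integrable (MeasureTheory.llr μ ν) μ
  then ENNReal.ofReal (∫ x, MeasureTheory.llr μ ν x ∂μ) else ∞

/-- The set of reweighted mixtures `C = {∑ i, λᵢ πᵢ : λ ∈ Δₘ}` (convex hull of the `πᵢ`). -/
def mixSet {X : Type*} [MeasurableSpace X] {m : ℕ} (π : Fin m → Measure X) :
    Set (Measure X) :=
  {ν | ∃ l : Fin m → ℝ≥0∞, (∑ i, l i) = 1 ∧ ν = ∑ i, l i • π i}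

lemma gibbs_nonneg {X : Type*} [MeasurableSpace X] (μ ν : Measure X)
    [IsProbabilityMeasure μ] [SigmaFinite ν] (hν : ν Set.univ ≤ 1)
    (hac : μ ≪ ν) (hint : Integrable (llr μ ν) μ) :
    0 ≤ ∫ x, llr μ ν x ∂μ := by
  set f := μ.rnDeriv ν with hf
  have hfm : Measurable f := Measure.measurable_rnDeriv μ ν
  have hwd : ν.withDensity f = μ := Measure.withDensity_rnDeriv_eq μ ν hac
  have hlint : ∫⁻ x, (f x)⁻¹ ∂μ ≤ 1 := by
    calc ∫⁻ x, (f x)⁻¹ ∂μ = ∫⁻ x, f x * (f x)⁻¹ ∂ν := by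
          rw [← hwd, lintegral_withDensity_eq_lintegral_mul ν hfm]
          · rfl
          · exact hfm.inv
      _ ≤ ∫⁻ _, 1 ∂ν := lintegral_mono fun x => ENNReal.mul_inv_le_one _
      _ = ν Set.univ := by simp
      _ ≤ 1 := hν
  set g : X → ℝ := fun x => ((f x)⁻¹).toReal with hg
  have hgint : Integrable g μ :=
    integrable_toReal_of_lintegral_ne_top (hfm.inv.aemeasurable)
      (lt_of_le_of_lt hlint one_lt_top).ne
  have hgintval : ∫ x, g x ∂μ ≤ 1 := by
    show ∫ x, (f⁻¹ x).toReal ∂μ ≤ 1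
    rw [integral_toReal hfm.inv.aemeasurable]
    · exact ENNReal.toReal_le_of_le_ofReal zero_le_one (by simpa using hlint)
    · exact (ae_lt_top hfm.inv (lt_of_le_of_lt hlint one_lt_top).ne)
  have hpos : ∀ᵐ x ∂μ, 0 < f x := Measure.rnDeriv_pos hac
  have hfin : ∀ᵐ x ∂μ, f x < ∞ := hac.ae_le (Measure.rnDeriv_lt_top μ ν)
  have hptwise : ∀ᵐ x ∂μ, -llr μ ν x ≤ g x - 1 := by
    filter_upwards [hpos, hfin] with x h0 hlt
    have hx0 : (f x).toReal ≠ 0 := by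
      simp [ENNReal.toReal_ne_zero, h0.ne', hlt.ne]
    have hgx : g x = ((f x).toReal)⁻¹ := by simp [hg, ENNReal.toReal_inv]
    have hgpos : 0 < g x := by
      rw [hgx]; positivity
    calc -llr μ ν x = Real.log (g x) := by rw [llr, hgx, Real.log_inv]
      _ ≤ g x - 1 := Real.log_le_sub_one_of_pos hgpos
  have hmono : ∫ x, -llr μ ν x ∂μ ≤ ∫ x, (g x - 1) ∂μ :=
    integral_mono_ae hint.neg (hgint.sub (integrable_const 1)) hptwise
  rw [integral_neg] at hmono
  have h2 : ∫ x, (g x - 1) ∂μ = (∫ x, g x ∂μ) - 1 := by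
    rw [integral_sub hgint (integrable_const 1)]; simp
  linarith [hgintval]

/-- With the canonical decomposition `μ = ∑ i, λ*ᵢ μᵢ` of `μ ≪ π` with
`KL(μ‖π) < ∞`, one has
`inf_{π̃ ∈ C} KL(μ‖π̃) ≤ ∑ i, λ*ᵢ KL(μᵢ‖πᵢ) = KL(μ‖π) − KL(λ*‖w)`. -/
theorem kl_to_mixSet_le
    {X : Type*} [MeasurableSpace X] [TopologicalSpace X] [PolishSpace X] [BorelSpace X]
    {m : ℕ} (w : Fin m → ℝ≥0∞) (π : Fin m → Measure X) (πmix μ : Measure X)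
    [∀ i, IsProbabilityMeasure (π i)] [IsProbabilityMeasure μ]
    (hw_pos : ∀ i, 0 < w i) (hw_sum : ∑ i, w i = 1)
    (hmix : πmix = ∑ i, w i • π i)
    (hac : μ ≪ πmix)
    (hKL_fin : klDiv μ πmix ≠ ∞)
    (lam : Fin m → ℝ≥0∞)
    (hlam : ∀ i, lam i = w i * ∫⁻ x, μ.rnDeriv πmix x ∂(π i))
    (μc : Fin m → Measure X)
    (hμc : ∀ i, μc i =
      if lam i = 0 then π i
      else (π i).withDensity (fun x => (w i / lam i) * μ.rnDeriv πmix x)) :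
    (⨅ ν ∈ mixSet π, klDiv μ ν) ≤ ∑ i, lam i * klDiv (μc i) (π i) ∧
      ∑ i, lam i * klDiv (μc i) (π i) =
        klDiv μ πmix -
          klDiv (∑ i, lam i • Measure.dirac i) (∑ i, w i • Measure.dirac i) := by
  classical
  set f := μ.rnDeriv πmix with hfdef
  have hfm : Measurable f := Measure.measurable_rnDeriv μ πmix
  -- basic weight facts
  have hw_ne0 : ∀ i, w i ≠ 0 := fun i => (hw_pos i).ne'
  have hw_le1 : ∀ i, w i ≤ 1 := by
    intro i
    rw [← hw_sum]
    exact Finset.single_le_sum (fun j _ => zero_le) (Finset.mem_univ i)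
  have hw_ne_top : ∀ i, w i ≠ ∞ := fun i => (lt_of_le_of_lt (hw_le1 i) one_lt_top).ne
  -- π i ≪ πmix
  have hπac : ∀ i, π i ≪ πmix := by
    intro i
    refine Measure.AbsolutelyContinuous.mk fun s hs h0 => ?_
    rw [hmix, Measure.finset_sum_apply] at h0
    have := (Finset.sum_eq_zero_iff.mp h0) i (Finset.mem_univ i)
    rw [Measure.smul_apply, smul_eq_mul] at this
    simpa [hw_ne0 i] using this
  haveI hπmix_prob : IsProbabilityMeasure πmix := by
    constructor
    rw [hmix, Measure.finset_sum_apply]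
    simp only [Measure.smul_apply, smul_eq_mul, measure_univ, mul_one]
    exact hw_sum
  have hμeq : πmix.withDensity f = μ := Measure.withDensity_rnDeriv_eq μ πmix hac
  -- value of ∫⁻ f ∂(π i)
  have hlw : ∀ i, ∫⁻ x, f x ∂(π i) = lam i / w i := by
    intro i
    rw [hlam i, mul_comm, mul_div_assoc, ENNReal.div_self (hw_ne0 i) (hw_ne_top i), mul_one]
  -- sum of lam = 1
  have hlam_sum : ∑ i, lam i = 1 := by
    have : ∑ i, lam i = ∫⁻ x, f x ∂πmix := by
      rw [hmix, lintegral_finset_sum_measure]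
      exact Finset.sum_congr rfl fun i _ => by rw [hlam i, lintegral_smul_measure, smul_eq_mul]
    rw [this, Measure.lintegral_rnDeriv hac, measure_univ]
  have hlam_le1 : ∀ i, lam i ≤ 1 := by
    intro i
    rw [← hlam_sum]
    exact Finset.single_le_sum (fun j _ => zero_le) (Finset.mem_univ i)
  have hlam_ne_top : ∀ i, lam i ≠ ∞ := fun i => (lt_of_le_of_lt (hlam_le1 i) one_lt_top).ne
  -- lam i = 0 → f vanishes π i a.e.
  have hf0 : ∀ i, lam i = 0 → f =ᵐ[π i] 0 := by
    intro i h0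
    have : ∫⁻ x, f x ∂(π i) = 0 := by rw [hlw i, h0, ENNReal.zero_div]
    exact (lintegral_eq_zero_iff hfm).mp this
  -- μc description for lam i ≠ 0
  have hμc_ne : ∀ i, lam i ≠ 0 → μc i = (π i).withDensity (fun x => (w i / lam i) * f x) := by
    intro i h; rw [hμc i, if_neg h]
  have hc_ne0 : ∀ i, lam i ≠ 0 → w i / lam i ≠ 0 :=
    fun i h => ENNReal.div_ne_zero.mpr ⟨hw_ne0 i, hlam_ne_top i⟩
  have hc_ne_top : ∀ i, lam i ≠ 0 → w i / lam i ≠ ∞ :=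
    fun i h => (ENNReal.div_lt_top (hw_ne_top i) h).ne
  -- μc i is a probability measure
  have hμc_univ : ∀ i, μc i Set.univ = 1 := by
    intro i
    by_cases h : lam i = 0
    · rw [hμc i, if_pos h]; exact measure_univ
    · rw [hμc_ne i h, withDensity_apply _ MeasurableSet.univ, Measure.restrict_univ,
        lintegral_const_mul _ hfm, hlw i, mul_comm, ← mul_div_assoc,
        ENNReal.div_mul_cancel (hw_ne0 i) (hw_ne_top i),
        ENNReal.div_self h (hlam_ne_top i)]
  haveI hμc_prob : ∀ i, IsProbabilityMeasure (μc i) := fun i => ⟨hμc_univ i⟩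
  have hμc_ac : ∀ i, μc i ≪ π i := by
    intro i
    by_cases h : lam i = 0
    · rw [hμc i, if_pos h]
    · rw [hμc_ne i h]; exact withDensity_absolutelyContinuous _ _
  -- decomposition of μ
  have hterm : ∀ i, lam i • μc i = (w i • π i).withDensity f := by
    intro i
    by_cases h : lam i = 0
    · rw [h, zero_smul]
      have h0 : f =ᵐ[w i • π i] 0 := Measure.ae_smul_measure (hf0 i h) (w i)
      rw [withDensity_congr_ae h0, withDensity_zero]
    · rw [hμc_ne i h, withDensity_smul_measure]
      have hcf : (fun x => (w i / lam i) * f x) = (w i / lam i) • f := rfl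
      rw [hcf, withDensity_smul _ hfm, smul_smul, ENNReal.mul_div_cancel h (hlam_ne_top i)]
  have hsum_μc : ∑ i, lam i • μc i = μ := by
    have h1 : ∑ i, lam i • μc i = ∑ i, (w i • π i).withDensity f :=
      Finset.sum_congr rfl fun i _ => hterm i
    rw [h1, ← Measure.sum_fintype, ← withDensity_sum, Measure.sum_fintype, ← hmix, hμeq]
  -- integrability of llr μ πmix
  have hll_int : Integrable (llr μ πmix) μ := by
    by_contra h
    rw [klDiv, if_neg (fun hc => h hc.2)] at hKL_fin
    exact hKL_fin rfl
  set I : ℝ := ∫ x, llr μ πmix x ∂μ with hIdef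
  have hklμ : klDiv μ πmix = ENNReal.ofReal I := by rw [klDiv, if_pos ⟨hac, hll_int⟩]
  have hint_smul : ∀ i, Integrable (llr μ πmix) (lam i • μc i) := by
    intro i
    refine hll_int.mono_measure (Measure.le_iff'.mpr fun s => ?_)
    rw [← hsum_μc, Measure.finset_sum_apply]
    exact Finset.single_le_sum (f := fun j => (lam j • μc j) s) (fun j _ => zero_le)
      (Finset.mem_univ i)
  have hint_c : ∀ i, lam i ≠ 0 → Integrable (llr μ πmix) (μc i) := fun i h =>
    (integrable_smul_measure h (hlam_ne_top i)).mp (hint_smul i)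
  -- a.e. positivity and finiteness of f along μc i
  have hf_lt_i : ∀ i, ∀ᵐ x ∂(μc i), f x < ∞ :=
    fun i => (hμc_ac i).ae_le ((hπac i).ae_le (Measure.rnDeriv_lt_top μ πmix))
  have hf_pos_i : ∀ i, lam i ≠ 0 → ∀ᵐ x ∂(μc i), f x ≠ 0 := by
    intro i h
    rw [hμc_ne i h, ae_withDensity_iff (f := fun x => w i / lam i * f x) ((measurable_const.mul hfm))]
    refine ae_of_all _ fun x hx => ?_
    intro hfx
    exact hx (by rw [hfx, mul_zero])
  have hrn_i : ∀ i, lam i ≠ 0 →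
      (μc i).rnDeriv (π i) =ᵐ[μc i] fun x => (w i / lam i) * f x := by
    intro i h
    have h2 := Measure.rnDeriv_withDensity (π i) (measurable_const.mul hfm)
      (f := fun x => (w i / lam i) * f x)
    rw [← hμc_ne i h] at h2
    exact (hμc_ac i).ae_le h2
  have hllr_i : ∀ i, lam i ≠ 0 → llr (μc i) (π i) =ᵐ[μc i]
      fun x => Real.log ((w i / lam i).toReal) + llr μ πmix x := by
    intro i h
    filter_upwards [hrn_i i h, hf_lt_i i, hf_pos_i i h] with x hx hlt h0
    have hc0 : ((w i / lam i)).toReal ≠ 0 :=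
      ENNReal.toReal_ne_zero.mpr ⟨hc_ne0 i h, hc_ne_top i h⟩
    have hf0' : (f x).toReal ≠ 0 := ENNReal.toReal_ne_zero.mpr ⟨h0, hlt.ne⟩
    rw [llr, hx, ENNReal.toReal_mul, Real.log_mul hc0 hf0']
    rfl
  have hint_llr_i : ∀ i, lam i ≠ 0 → Integrable (llr (μc i) (π i)) (μc i) := by
    intro i h
    exact ((integrable_const (Real.log ((w i / lam i).toReal))).add (hint_c i h)).congr
      (hllr_i i h).symm
  set Ival : Fin m → ℝ := fun i => ∫ x, llr (μc i) (π i) x ∂(μc i) with hIvaldef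
  have hkl_i : ∀ i, lam i ≠ 0 → klDiv (μc i) (π i) = ENNReal.ofReal (Ival i) := by
    intro i h
    rw [klDiv, if_pos ⟨hμc_ac i, hint_llr_i i h⟩]
  have hIval_nonneg : ∀ i, lam i ≠ 0 → 0 ≤ Ival i := by
    intro i h
    haveI := hμc_prob i
    exact gibbs_nonneg (μc i) (π i) (le_of_eq measure_univ) (hμc_ac i) (hint_llr_i i h)
  have hIval_eq : ∀ i, lam i ≠ 0 → Ival i
      = Real.log ((w i / lam i).toReal) + ∫ x, llr μ πmix x ∂(μc i) := by
    intro i h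
    haveI := hμc_prob i
    rw [hIvaldef]
    simp only
    rw [integral_congr_ae (hllr_i i h), integral_add (integrable_const _) (hint_c i h),
      integral_const, probReal_univ]
    simp
  have hterm2 : ∀ i, lam i * klDiv (μc i) (π i) = ENNReal.ofReal ((lam i).toReal * Ival i) := by
    intro i
    by_cases h : lam i = 0
    · simp [h]
    · rw [hkl_i i h, ← ENNReal.ofReal_toReal (hlam_ne_top i), ← ENNReal.ofReal_mul
        ENNReal.toReal_nonneg, ENNReal.ofReal_toReal (hlam_ne_top i)]
  have hsum_kl : ∑ i, lam i * klDiv (μc i) (π i)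
      = ENNReal.ofReal (∑ i, (lam i).toReal * Ival i) := by
    simp only [hterm2]
    rw [← ENNReal.ofReal_sum_of_nonneg]
    intro i _
    by_cases h : lam i = 0
    · simp [h]
    · exact mul_nonneg ENNReal.toReal_nonneg (hIval_nonneg i h)
  set D : ℝ := ∑ i, (lam i).toReal * Real.log ((lam i).toReal / (w i).toReal) with hDdef
  have hJ0 : ∫ x, llr μ πmix x ∂(∑ i, lam i • μc i)
      = ∑ i, (lam i).toReal * ∫ x, llr μ πmix x ∂(μc i) := by
    rw [integral_finset_sum_measure (fun i _ => hint_smul i)]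
    exact Finset.sum_congr rfl fun i _ => by rw [integral_smul_measure]; rfl
  have hJ : I = ∑ i, (lam i).toReal * ∫ x, llr μ πmix x ∂(μc i) := by
    rw [hIdef, ← hJ0, hsum_μc]
  have hId : ∑ i, (lam i).toReal * Ival i = I - D := by
    have hterm3 : ∀ i, (lam i).toReal * Ival i
        = (lam i).toReal * (∫ x, llr μ πmix x ∂(μc i))
          - (lam i).toReal * Real.log ((lam i).toReal / (w i).toReal) := by
      intro i
      by_cases h : lam i = 0
      · simp [h]
      · have hw0 : (w i).toReal ≠ 0 := ENNReal.toReal_ne_zero.mpr ⟨hw_ne0 i, hw_ne_top i⟩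
        have hl0 : (lam i).toReal ≠ 0 := ENNReal.toReal_ne_zero.mpr ⟨h, hlam_ne_top i⟩
        have hlog : Real.log ((w i / lam i).toReal)
            = - Real.log ((lam i).toReal / (w i).toReal) := by
          rw [ENNReal.toReal_div, Real.log_div hw0 hl0, Real.log_div hl0 hw0]
          ring
        rw [hIval_eq i h, hlog]
        ring
    rw [Finset.sum_congr rfl fun i _ => hterm3 i, Finset.sum_sub_distrib, ← hJ, hDdef]
  -- the discrete measures
  set ν1 : Measure (Fin m) := ∑ i, lam i • Measure.dirac i with hν1def
  set ν2 : Measure (Fin m) := ∑ i, w i • Measure.dirac i with hν2def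
  have hν1s : ∀ j, ν1 {j} = lam j := by
    intro j
    rw [hν1def, Measure.finset_sum_apply]
    simp [Measure.dirac_apply, Set.indicator_apply]
  have hν2s : ∀ j, ν2 {j} = w j := by
    intro j
    rw [hν2def, Measure.finset_sum_apply]
    simp [Measure.dirac_apply, Set.indicator_apply]
  haveI hν1p : IsProbabilityMeasure ν1 := by
    constructor
    rw [hν1def, Measure.finset_sum_apply]
    simp [hlam_sum]
  haveI hν2p : IsProbabilityMeasure ν2 := by
    constructor
    rw [hν2def, Measure.finset_sum_apply]
    simp [hw_sum]
  have hν12 : ν1 = ν2.withDensity (fun i => lam i / w i) := by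
    refine Measure.ext_of_singleton fun j => ?_
    rw [withDensity_apply _ (measurableSet_singleton j), lintegral_singleton, hν2s j, hν1s j,
      ENNReal.div_mul_cancel (hw_ne0 j) (hw_ne_top j)]
  have hacd : ν1 ≪ ν2 := by
    rw [hν12]; exact withDensity_absolutelyContinuous _ _
  have hintd : Integrable (llr ν1 ν2) ν1 := Integrable.of_finite
  have hrnd : ν1.rnDeriv ν2 =ᵐ[ν1] fun i => lam i / w i := by
    have h2 := Measure.rnDeriv_withDensity ν2 (Measurable.of_discrete)
      (f := fun i => lam i / w i)
    rw [← hν12] at h2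
    exact hacd.ae_le h2
  have hDd : ∫ i, llr ν1 ν2 i ∂ν1 = D := by
    have : llr ν1 ν2 =ᵐ[ν1] fun i => Real.log ((lam i / w i).toReal) := by
      filter_upwards [hrnd] with i hi
      rw [llr, hi]
    rw [integral_congr_ae this, integral_fintype Integrable.of_finite, hDdef]
    refine Finset.sum_congr rfl fun j _ => ?_
    rw [measureReal_def, hν1s j, ENNReal.toReal_div, smul_eq_mul]
  have hD_nonneg : 0 ≤ D := hDd ▸ gibbs_nonneg ν1 ν2 (le_of_eq measure_univ) hacd hintd
  have hklD : klDiv ν1 ν2 = ENNReal.ofReal D := by rw [klDiv, if_pos ⟨hacd, hintd⟩, hDd]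
  have hpart2 : ∑ i, lam i * klDiv (μc i) (π i) = klDiv μ πmix - klDiv ν1 ν2 := by
    rw [hsum_kl, hId, hklμ, hklD, ENNReal.ofReal_sub _ hD_nonneg]

  refine ⟨?_, hpart2⟩
  -- Part 1: the infimum bound
  set νs : Measure X := ∑ i, lam i • π i with hνsdef
  have hmem : νs ∈ mixSet π := ⟨lam, hlam_sum, hνsdef⟩
  set b : Fin m → X → ℝ≥0∞ := fun i => (π i).rnDeriv πmix with hbdef
  have hbm : ∀ i, Measurable (b i) := fun i => Measure.measurable_rnDeriv _ _
  set q : X → ℝ≥0∞ := fun x => ∑ i, lam i * b i x with hqdef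
  have hqm : Measurable q := Finset.measurable_sum _ fun i _ => (hbm i).const_mul _
  have hνs_eq : νs = πmix.withDensity q := by
    refine Measure.ext fun s hs => ?_
    rw [hνsdef, Measure.finset_sum_apply, withDensity_apply _ hs, hqdef,
      lintegral_finset_sum _ (fun i _ => (hbm i).const_mul _)]
    refine Finset.sum_congr rfl fun i _ => ?_
    rw [lintegral_const_mul _ (hbm i), Measure.setLIntegral_rnDeriv (hπac i),
      Measure.smul_apply, smul_eq_mul]
  have hbfin : ∀ᵐ x ∂πmix, ∀ i, b i x ≠ ∞ :=
    (ae_all_iff).mpr fun i => Measure.rnDeriv_ne_top _ _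
  have hone : (fun x => ∑ i, w i * b i x) =ᵐ[πmix] fun _ => 1 := by
    have hwd : πmix.withDensity (fun x => ∑ i, w i * b i x)
        = πmix.withDensity (fun _ => 1) := by
      have h1 : πmix.withDensity (fun _ => (1:ℝ≥0∞)) = πmix := by
        rw [withDensity_const, one_smul]
      rw [h1]
      refine Measure.ext fun s hs => ?_
      rw [withDensity_apply _ hs, lintegral_finset_sum _ (fun i _ => (hbm i).const_mul _)]
      have hterm4 : ∀ i, ∫⁻ x in s, w i * b i x ∂πmix = w i * π i s := fun i => by
        rw [lintegral_const_mul _ (hbm i), Measure.setLIntegral_rnDeriv (hπac i)]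
      simp_rw [hterm4]
      rw [hmix, Measure.finset_sum_apply]
      simp [Measure.smul_apply]
    exact (withDensity_eq_iff_of_sigmaFinite
      (Finset.measurable_sum _ fun i _ => (hbm i).const_mul _).aemeasurable
      aemeasurable_const).mp hwd
  have hfb0 : ∀ᵐ x ∂πmix, ∀ i, lam i = 0 → f x * b i x = 0 := by
    rw [ae_all_iff]
    intro i
    by_cases h : lam i = 0
    · have hint0 : ∫⁻ x, b i x * f x ∂πmix = ∫⁻ x, f x ∂(π i) :=
        lintegral_rnDeriv_mul (hπac i) hfm.aemeasurable
      rw [hlw i, h, ENNReal.zero_div] at hint0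
      have h0 := (lintegral_eq_zero_iff ((hbm i).mul hfm)).mp hint0
      filter_upwards [h0] with x hx _
      rw [mul_comm]
      exact hx
    · exact ae_of_all _ fun x hx => absurd hx h
  have hgood : ∀ᵐ x ∂μ, f x ≠ 0 ∧ f x ≠ ∞ ∧ (∀ i, b i x ≠ ∞)
      ∧ (∑ i, w i * b i x) = 1 ∧ (∀ i, lam i = 0 → b i x = 0) := by
    have h1 : ∀ᵐ x ∂μ, f x ≠ 0 := (Measure.rnDeriv_pos hac).mono fun x hx => hx.ne'
    have h2 : ∀ᵐ x ∂μ, f x ≠ ∞ := hac.ae_le (Measure.rnDeriv_ne_top μ πmix)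
    have h3 : ∀ᵐ x ∂μ, ∀ i, b i x ≠ ∞ := hac.ae_le hbfin
    have h4 : ∀ᵐ x ∂μ, (∑ i, w i * b i x) = 1 := hac.ae_le hone
    have h5 : ∀ᵐ x ∂μ, ∀ i, lam i = 0 → f x * b i x = 0 := hac.ae_le hfb0
    filter_upwards [h1, h2, h3, h4, h5] with x a1 a2 a3 a4 a5
    refine ⟨a1, a2, a3, a4, fun i hi => ?_⟩
    rcases mul_eq_zero.mp (a5 i hi) with h | h
    · exact absurd h a1
    · exact h
  set Sf : Finset (Fin m) := Finset.univ.filter (fun i => lam i ≠ 0) with hSfdef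
  have hSne : Sf.Nonempty := by
    by_contra h
    rw [Finset.not_nonempty_iff_eq_empty] at h
    have h0 : ∑ i, lam i = 0 := Finset.sum_eq_zero fun i _ => by
      by_contra h'
      exact (Finset.eq_empty_iff_forall_notMem.mp h i)
        (Finset.mem_filter.mpr ⟨Finset.mem_univ i, h'⟩)
    rw [hlam_sum] at h0
    exact one_ne_zero h0
  set aL : ℝ≥0∞ := Sf.inf' hSne (fun i => lam i / w i) with haLdef
  set AU : ℝ≥0∞ := Finset.univ.sup (fun i => lam i / w i) with hAUdef
  have hle_AU : ∀ i, lam i / w i ≤ AU := fun i => by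
    rw [hAUdef]; exact Finset.le_sup (f := fun i => lam i / w i) (Finset.mem_univ i)
  have hle_aL : ∀ i ∈ Sf, aL ≤ lam i / w i := fun i hi => by
    rw [haLdef]; exact Finset.inf'_le _ hi
  have haL_pos : 0 < aL := by
    rw [haLdef, Finset.lt_inf'_iff]
    intro i hi
    exact ENNReal.div_pos (Finset.mem_filter.mp hi).2 (hw_ne_top i)
  have hAU_ne_top : AU ≠ ∞ := by
    refine ((Finset.sup_lt_iff (by simp : (⊥:ℝ≥0∞) < ∞)).mpr
      (fun i _ => ENNReal.div_lt_top (hlam_ne_top i) (hw_ne0 i))).ne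
  have haL_ne_top : aL ≠ ∞ := by
    obtain ⟨i, hi⟩ := hSne
    exact (lt_of_le_of_lt (hle_aL i hi)
      (ENNReal.div_lt_top (hlam_ne_top i) (hw_ne0 i))).ne
  have hqbound : ∀ᵐ x ∂μ, aL ≤ q x ∧ q x ≤ AU := by
    filter_upwards [hgood] with x hx
    obtain ⟨hf0x, hftop, hbtop, hsum1, hb0⟩ := hx
    have hq_eq : q x = ∑ i, (lam i / w i) * (w i * b i x) := by
      rw [hqdef]
      refine Finset.sum_congr rfl fun i _ => ?_
      rw [← mul_assoc, ENNReal.div_mul_cancel (hw_ne0 i) (hw_ne_top i)]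
    constructor
    · have hSsum : ∑ i ∈ Sf, w i * b i x = 1 := by
        rw [← hsum1]
        refine Finset.sum_subset (Finset.subset_univ Sf) fun i _ hni => ?_
        have : lam i = 0 := by
          by_contra h'
          exact hni (Finset.mem_filter.mpr ⟨Finset.mem_univ i, h'⟩)
        rw [hb0 i this, mul_zero]
      calc aL = aL * ∑ i ∈ Sf, w i * b i x := by rw [hSsum, mul_one]
        _ = ∑ i ∈ Sf, aL * (w i * b i x) := Finset.mul_sum _ _ _
        _ ≤ ∑ i ∈ Sf, (lam i / w i) * (w i * b i x) :=
            Finset.sum_le_sum fun i hi => mul_le_mul_left (hle_aL i hi) _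
        _ = ∑ i, (lam i / w i) * (w i * b i x) := by
            refine Finset.sum_subset (Finset.subset_univ Sf) fun i _ hni => ?_
            have : lam i = 0 := by
              by_contra h'
              exact hni (Finset.mem_filter.mpr ⟨Finset.mem_univ i, h'⟩)
            rw [this, ENNReal.zero_div, zero_mul]
        _ = q x := hq_eq.symm
    · rw [hq_eq]
      calc ∑ i, (lam i / w i) * (w i * b i x)
          ≤ ∑ i, AU * (w i * b i x) :=
            Finset.sum_le_sum fun i _ => mul_le_mul_left (hle_AU i) _
        _ = AU * ∑ i, w i * b i x := (Finset.mul_sum _ _ _).symm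
        _ = AU := by rw [hsum1, mul_one]
  have hq_ne0 : ∀ᵐ x ∂μ, q x ≠ 0 := by
    filter_upwards [hqbound] with x hx h0
    rw [h0] at hx
    exact (haL_pos.trans_le hx.1).false
  have hq_ne_top : ∀ᵐ x ∂μ, q x ≠ ∞ :=
    hqbound.mono fun x hx => (lt_of_le_of_lt hx.2 hAU_ne_top.lt_top).ne
  have hmujoin : ∀ᵐ x ∂πmix, f x ≠ 0 → (q x ≠ 0 ∧ q x ≠ ∞) := by
    have h := hq_ne0.and hq_ne_top
    rw [← hμeq] at h
    exact (ae_withDensity_iff hfm).mp h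
  have hwd2 : νs.withDensity (fun x => f x / q x) = μ := by
    rw [hνs_eq, ← withDensity_mul _ (g := fun x => f x / q x) hqm (hfm.div hqm)]
    have hcongr : (q * fun x => f x / q x) =ᵐ[πmix] f := by
      filter_upwards [hmujoin] with x hx
      simp only [Pi.mul_apply]
      by_cases h0 : f x = 0
      · rw [h0, ENNReal.zero_div, mul_zero]
      · exact ENNReal.mul_div_cancel (hx h0).1 (hx h0).2
    rw [withDensity_congr_ae hcongr, hμeq]
  have hacs : μ ≪ νs := by
    rw [← hwd2]; exact withDensity_absolutelyContinuous _ _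
  haveI hνsp : IsProbabilityMeasure νs := by
    constructor
    rw [hνsdef, Measure.finset_sum_apply]
    simp [hlam_sum]
  have hrns : μ.rnDeriv νs =ᵐ[μ] fun x => f x / q x := by
    have h2 := Measure.rnDeriv_withDensity νs (hfm.div hqm) (f := fun x => f x / q x)
    rw [hwd2] at h2
    exact hacs.ae_le h2
  have hllrs : llr μ νs =ᵐ[μ] fun x => llr μ πmix x - Real.log ((q x).toReal) := by
    filter_upwards [hrns, hgood, hq_ne0, hq_ne_top] with x hx hg hq0 hqt
    rw [llr, hx, ENNReal.toReal_div,
      Real.log_div (ENNReal.toReal_ne_zero.mpr ⟨hg.1, hg.2.1⟩)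
        (ENNReal.toReal_ne_zero.mpr ⟨hq0, hqt⟩)]
    rfl
  have hlogq_meas : Measurable fun x => Real.log ((q x).toReal) :=
    Real.measurable_log.comp hqm.ennreal_toReal
  have hlogq_bound : ∀ᵐ x ∂μ,
      |Real.log ((q x).toReal)| ≤ max |Real.log aL.toReal| |Real.log AU.toReal| := by
    filter_upwards [hqbound] with x hx
    have hqt : q x ≠ ∞ := (lt_of_le_of_lt hx.2 hAU_ne_top.lt_top).ne
    refine abs_le_max_abs_abs ?_ ?_
    · exact Real.log_le_log (ENNReal.toReal_pos haL_pos.ne' haL_ne_top)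
        (ENNReal.toReal_mono hqt hx.1)
    · refine Real.log_le_log ?_ (ENNReal.toReal_mono hAU_ne_top hx.2)
      exact lt_of_lt_of_le (ENNReal.toReal_pos haL_pos.ne' haL_ne_top)
        (ENNReal.toReal_mono hqt hx.1)
  have hlogq_int : Integrable (fun x => Real.log ((q x).toReal)) μ :=
    Integrable.mono' (integrable_const _) hlogq_meas.aestronglyMeasurable hlogq_bound
  have hllrs_int : Integrable (llr μ νs) μ := (hll_int.sub hlogq_int).congr hllrs.symm
  have hkls : klDiv μ νs = ENNReal.ofReal (I - ∫ x, Real.log ((q x).toReal) ∂μ) := by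
    rw [klDiv, if_pos ⟨hacs, hllrs_int⟩, integral_congr_ae hllrs,
      integral_sub hll_int hlogq_int]
  -- the weights t i and their integrals
  have hbint : ∀ i, ∫⁻ x, w i * b i x ∂μ = lam i := by
    intro i
    rw [lintegral_const_mul _ (hbm i), ← hμeq,
      lintegral_withDensity_eq_lintegral_mul _ hfm (hbm i)]
    have hcomm : (f * b i) = fun x => b i x * f x := by
      funext x; exact mul_comm _ _
    rw [hcomm, lintegral_rnDeriv_mul (hπac i) hfm.aemeasurable, hlw i,
      ENNReal.mul_div_cancel (hw_ne0 i) (hw_ne_top i)]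
  have htint : ∀ i, Integrable (fun x => (w i * b i x).toReal) μ := fun i =>
    integrable_toReal_of_lintegral_ne_top ((hbm i).const_mul _).aemeasurable
      (by rw [hbint i]; exact hlam_ne_top i)
  have htval : ∀ i, ∫ x, (w i * b i x).toReal ∂μ = (lam i).toReal := by
    intro i
    rw [integral_toReal ((hbm i).const_mul _).aemeasurable ?_, hbint i]
    filter_upwards [hgood] with x hx
    exact ENNReal.mul_lt_top (hw_ne_top i).lt_top (hx.2.2.1 i).lt_top
  have hptw : ∀ᵐ x ∂μ,
      (∑ i, (w i * b i x).toReal * Real.log ((lam i).toReal / (w i).toReal))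
        ≤ Real.log ((q x).toReal) := by
    filter_upwards [hgood, hq_ne0, hq_ne_top] with x hx hq0 hqt
    obtain ⟨hf0x, hftop, hbtop, hsum1, hb0⟩ := hx
    set Q : ℝ := (q x).toReal with hQdef
    have hQpos : 0 < Q := ENNReal.toReal_pos hq0 hqt
    set t : Fin m → ℝ := fun i => (w i * b i x).toReal with htdef
    have ht_nonneg : ∀ i, 0 ≤ t i := fun i => ENNReal.toReal_nonneg
    have hsumt : ∑ i, t i = 1 := by
      rw [htdef, ← ENNReal.toReal_sum (fun i _ =>
        (ENNReal.mul_lt_top (hw_ne_top i).lt_top (hbtop i).lt_top).ne), hsum1,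
        ENNReal.toReal_one]
    set r : Fin m → ℝ := fun i => (lam i).toReal / (w i).toReal with hrdef
    have hsumtr : ∑ i, t i * r i = Q := by
      rw [hQdef, hqdef]
      rw [ENNReal.toReal_sum (fun i _ =>
        (ENNReal.mul_lt_top (hlam_ne_top i).lt_top (hbtop i).lt_top).ne)]
      refine Finset.sum_congr rfl fun i _ => ?_
      simp only [htdef, hrdef, ENNReal.toReal_mul]
      have hw0 : (w i).toReal ≠ 0 := ENNReal.toReal_ne_zero.mpr ⟨hw_ne0 i, hw_ne_top i⟩
      field_simp
    have hkey : ∀ i, t i * Real.log (r i)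
        ≤ t i * (Real.log Q + r i / Q - 1) := by
      intro i
      by_cases h : lam i = 0
      · have : t i = 0 := by rw [htdef]; simp [hb0 i h]
        rw [this, zero_mul, zero_mul]
      · refine mul_le_mul_of_nonneg_left ?_ (ht_nonneg i)
        have hrpos : 0 < r i := by
          rw [hrdef]
          exact div_pos (ENNReal.toReal_pos h (hlam_ne_top i))
            (ENNReal.toReal_pos (hw_ne0 i) (hw_ne_top i))
        have : Real.log (r i) = Real.log (r i / Q) + Real.log Q := by
          rw [← Real.log_mul (by positivity) hQpos.ne', div_mul_cancel₀ _ hQpos.ne']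
        rw [this]
        have hle := Real.log_le_sub_one_of_pos (x := r i / Q) (by positivity)
        linarith
    calc ∑ i, t i * Real.log (r i)
        ≤ ∑ i, t i * (Real.log Q + r i / Q - 1) := Finset.sum_le_sum fun i _ => hkey i
      _ = (∑ i, t i) * Real.log Q + (∑ i, t i * r i) / Q - (∑ i, t i) := by
          simp only [mul_add, mul_sub, mul_one, ← mul_div_assoc]
          rw [Finset.sum_sub_distrib, Finset.sum_add_distrib, ← Finset.sum_mul,
            ← Finset.sum_div]
      _ = Real.log Q := by
          rw [hsumt, hsumtr, one_mul, div_self hQpos.ne']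
          ring
  have hsum_int : ∫ x, (∑ i, (w i * b i x).toReal
      * Real.log ((lam i).toReal / (w i).toReal)) ∂μ = D := by
    rw [integral_finset_sum _ (fun i _ => (htint i).mul_const _), hDdef]
    refine Finset.sum_congr rfl fun i _ => ?_
    rw [integral_mul_const, htval i]
  have hDle : D ≤ ∫ x, Real.log ((q x).toReal) ∂μ := by
    rw [← hsum_int]
    exact integral_mono_ae (integrable_finset_sum _ fun i _ => (htint i).mul_const _)
      hlogq_int hptw
  calc ⨅ ν ∈ mixSet π, klDiv μ ν ≤ klDiv μ νs := biInf_le _ hmem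
    _ = ENNReal.ofReal (I - ∫ x, Real.log ((q x).toReal) ∂μ) := hkls
    _ ≤ ENNReal.ofReal (I - D) := ENNReal.ofReal_le_ofReal (by linarith)
    _ = ∑ i, lam i * klDiv (μc i) (π i) := by rw [hsum_kl, hId]
end

section
/- Joint convexity step for transport costs: let c : X × X → [0, ∞] be lower semicontinuous, α : [0,∞) → [0,∞] increasing, convex, lower semicontinuous with α(0) = 0. If μ = Σᵢ λᵢ μᵢ with λ ∈ Δₘ and C is the convex hull of π₁,…,πₘ, then α(T_c(μ, C)) ≤ Σᵢ λᵢ α(T_c(μᵢ, πᵢ)), where T_c denotes the optimal transport cost and T_c(μ, C) := inf over π̃ ∈ C of T_c(μ, π̃). -/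
open MeasureTheory ENNReal

/-- Optimal transport cost `T_c(μ, ν) := inf over couplings γ of ∫ c dγ`. -/
noncomputable def transportCost {X : Type*} [MeasurableSpace X]
    (c : X → X → ℝ≥0∞) (μ ν : Measure X) : ℝ≥0∞ :=
  ⨅ (γ : Measure (X × X)) (_ : γ.fst = μ ∧ γ.snd = ν), ∫⁻ p, c p.1 p.2 ∂γ

/-! Gluing `ε`-optimal couplings of the pairs `(μᵢ, πᵢ)` with the weights `λᵢ` gives a coupling of
`∑ λᵢ μᵢ` with `∑ λᵢ πᵢ ∈ C`, so `T_c` is jointly convex: `T_c(μ, C) ≤ ∑ λᵢ T_c(μᵢ, πᵢ)`.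
Since `α` is monotone and convex, Jensen's inequality finishes the proof. -/

namespace ENNReal

theorem map_sum_le_of_convex {ι : Type*} {α : ℝ≥0∞ → ℝ≥0∞}
    (hα : ∀ p q t : ℝ≥0∞, t ≤ 1 → α (t * p + (1 - t) * q) ≤ t * α p + (1 - t) * α q)
    (s : Finset ι) (l x : ι → ℝ≥0∞) (hl : ∑ i ∈ s, l i = 1) :
    α (∑ i ∈ s, l i * x i) ≤ ∑ i ∈ s, l i * α (x i) := by
  classical
  induction s using Finset.induction_on generalizing l with
  | empty => simp at hl
  | @insert a s ha ih =>
    rw [Finset.sum_insert ha] at hl ⊢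
    rw [Finset.sum_insert ha]
    set r := ∑ i ∈ s, l i with hr
    have hla : l a ≤ 1 := le_self_add.trans hl.le
    have hr_eq : 1 - l a = r := by
      rw [← hl, ENNReal.add_sub_cancel_left (ne_top_of_le_ne_top one_ne_top hla)]
    by_cases hr0 : r = 0
    · have hs : ∀ i ∈ s, l i = 0 := Finset.sum_eq_zero_iff.mp hr0
      have hla1 : l a = 1 := by rwa [hr0, add_zero] at hl
      have hvanish : ∀ y : ι → ℝ≥0∞, ∑ i ∈ s, l i * y i = 0 := fun y =>
        Finset.sum_eq_zero fun i hi => by rw [hs i hi, zero_mul]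
      simp [hvanish, hla1]
    have hr_top : r ≠ ∞ := ne_top_of_le_ne_top one_ne_top (hl ▸ le_add_self)
    have hrescale : ∀ y : ι → ℝ≥0∞, ∑ i ∈ s, l i * y i = r * ∑ i ∈ s, l i / r * y i := by
      intro y
      rw [Finset.mul_sum]
      exact Finset.sum_congr rfl fun i _ => by rw [← mul_assoc, ENNReal.mul_div_cancel hr0 hr_top]
    have hnormalized : ∑ i ∈ s, l i / r = 1 := by
      simp_rw [div_eq_mul_inv, ← Finset.sum_mul, ← hr, ENNReal.mul_inv_cancel hr0 hr_top]
    calc α (l a * x a + ∑ i ∈ s, l i * x i)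
        = α (l a * x a + (1 - l a) * ∑ i ∈ s, l i / r * x i) := by rw [hr_eq, hrescale]
      _ ≤ l a * α (x a) + (1 - l a) * α (∑ i ∈ s, l i / r * x i) := hα _ _ _ hla
      _ ≤ l a * α (x a) + (1 - l a) * ∑ i ∈ s, l i / r * α (x i) := by
        gcongr
        exact ih _ hnormalized
      _ = l a * α (x a) + ∑ i ∈ s, l i * α (x i) := by rw [hr_eq, ← hrescale]

end ENNReal

namespace MeasureTheory.Measure

variable {X Y : Type*} [MeasurableSpace X] [MeasurableSpace Y]

theorem map_finsetSum_smul {ι : Type*} {f : X → Y} (hf : Measurable f) (s : Finset ι)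
    (l : ι → ℝ≥0∞) (μ : ι → Measure X) :
    (∑ i ∈ s, l i • μ i).map f = ∑ i ∈ s, l i • (μ i).map f := by
  simp only [← mapₗ_apply_of_measurable hf, _root_.map_sum, _root_.map_smul]

end MeasureTheory.Measure

section TransportCost

variable {X : Type*} [MeasurableSpace X]

theorem transportCost_le_lintegral (c : X → X → ℝ≥0∞) {μ ν : Measure X}
    {γ : Measure (X × X)} (hγ : γ.fst = μ ∧ γ.snd = ν) :
    transportCost c μ ν ≤ ∫⁻ p, c p.1 p.2 ∂γ :=
  iInf₂_le γ hγ

theorem exists_coupling_lintegral_le_transportCost_add (c : X → X → ℝ≥0∞)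
    (μ ν : Measure X) [IsProbabilityMeasure μ] [IsProbabilityMeasure ν]
    {ε : ℝ≥0∞} (hε : ε ≠ 0) :
    ∃ γ : Measure (X × X), (γ.fst = μ ∧ γ.snd = ν) ∧
      ∫⁻ p, c p.1 p.2 ∂γ ≤ transportCost c μ ν + ε := by
  by_cases htop : transportCost c μ ν = ∞
  · exact ⟨μ.prod ν, ⟨Measure.fst_prod, Measure.snd_prod⟩, by simp [htop]⟩
  obtain ⟨γ, hγ⟩ := iInf_lt_iff.mp (ENNReal.lt_add_right htop hε)
  obtain ⟨hcoupling, hlt⟩ := iInf_lt_iff.mp hγ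
  exact ⟨γ, hcoupling, hlt.le⟩

theorem transportCost_sum_smul_le (c : X → X → ℝ≥0∞) {ι : Type*} (s : Finset ι)
    (l : ι → ℝ≥0∞) (hl : ∑ i ∈ s, l i = 1) (μ ν : ι → Measure X)
    [∀ i, IsProbabilityMeasure (μ i)] [∀ i, IsProbabilityMeasure (ν i)] :
    transportCost c (∑ i ∈ s, l i • μ i) (∑ i ∈ s, l i • ν i) ≤
      ∑ i ∈ s, l i * transportCost c (μ i) (ν i) := by
  refine ENNReal.le_of_forall_pos_le_add fun ε hε _ => ?_
  choose γ hγ hγ_cost using fun i =>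
    exists_coupling_lintegral_le_transportCost_add c (μ i) (ν i) (ε := ε) (by simpa using hε.ne')
  have hglued : (∑ i ∈ s, l i • γ i).fst = ∑ i ∈ s, l i • μ i ∧
      (∑ i ∈ s, l i • γ i).snd = ∑ i ∈ s, l i • ν i := by
    simp only [Measure.fst, Measure.snd, Measure.map_finsetSum_smul measurable_fst,
      Measure.map_finsetSum_smul measurable_snd]
    exact ⟨Finset.sum_congr rfl fun i _ => by rw [← Measure.fst, (hγ i).1],
      Finset.sum_congr rfl fun i _ => by rw [← Measure.snd, (hγ i).2]⟩
  calc transportCost c (∑ i ∈ s, l i • μ i) (∑ i ∈ s, l i • ν i)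
      ≤ ∫⁻ p, c p.1 p.2 ∂(∑ i ∈ s, l i • γ i) := transportCost_le_lintegral c hglued
    _ = ∑ i ∈ s, l i * ∫⁻ p, c p.1 p.2 ∂(γ i) := by
      rw [lintegral_finsetSum_measure]
      exact Finset.sum_congr rfl fun i _ => lintegral_smul_measure _ _
    _ ≤ ∑ i ∈ s, l i * (transportCost c (μ i) (ν i) + ε) := by
      gcongr with i
      exact hγ_cost i
    _ = ∑ i ∈ s, l i * transportCost c (μ i) (ν i) + ε := by
      simp_rw [mul_add, Finset.sum_add_distrib, ← Finset.sum_mul, hl, one_mul]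

end TransportCost

theorem alpha_transportCost_mixSet_le_general
    {X : Type*} [MeasurableSpace X]
    (c : X → X → ℝ≥0∞)
    (α : ℝ≥0∞ → ℝ≥0∞)
    (hα_mono : Monotone α)
    (hα_conv : ∀ p q : ℝ≥0∞, ∀ t : ℝ≥0∞, t ≤ 1 →
      α (t * p + (1 - t) * q) ≤ t * α p + (1 - t) * α q)
    {m : ℕ} (lam : Fin m → ℝ≥0∞) (hlam : ∑ i, lam i = 1)
    (μc π : Fin m → Measure X)
    [∀ i, IsProbabilityMeasure (μc i)] [∀ i, IsProbabilityMeasure (π i)] :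
    α (⨅ ν ∈ mixSet π, transportCost c (∑ i, lam i • μc i) ν) ≤
      ∑ i, lam i * α (transportCost c (μc i) (π i)) := by
  have hmix_mem : ∑ i, lam i • π i ∈ mixSet π := ⟨lam, hlam, rfl⟩
  calc α (⨅ ν ∈ mixSet π, transportCost c (∑ i, lam i • μc i) ν)
      ≤ α (∑ i, lam i * transportCost c (μc i) (π i)) :=
        hα_mono ((biInf_le _ hmix_mem).trans (transportCost_sum_smul_le c _ lam hlam μc π))
    _ ≤ ∑ i, lam i * α (transportCost c (μc i) (π i)) :=
        ENNReal.map_sum_le_of_convex hα_conv _ lam _ hlam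

/-- Joint convexity step: if `μ = ∑ i, λᵢ μᵢ` with `λ ∈ Δₘ`, `c` is a
lower semicontinuous cost, and `α` is increasing, convex, lower semicontinuous with
`α(0) = 0`, then `α(T_c(μ, C)) ≤ ∑ i, λᵢ α(T_c(μᵢ, πᵢ))`. -/
theorem alpha_transportCost_mixSet_le
    {X : Type*} [MeasurableSpace X] [TopologicalSpace X] [PolishSpace X] [BorelSpace X]
    (c : X → X → ℝ≥0∞)
    (hc : LowerSemicontinuous (fun p : X × X => c p.1 p.2))
    (α : ℝ≥0∞ → ℝ≥0∞)
    (hα_mono : Monotone α) (hα_zero : α 0 = 0) (hα_lsc : LowerSemicontinuous α)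
    (hα_conv : ∀ p q : ℝ≥0∞, ∀ t : ℝ≥0∞, t ≤ 1 →
      α (t * p + (1 - t) * q) ≤ t * α p + (1 - t) * α q)
    {m : ℕ} (lam : Fin m → ℝ≥0∞) (hlam : ∑ i, lam i = 1)
    (μc π : Fin m → Measure X)
    [∀ i, IsProbabilityMeasure (μc i)] [∀ i, IsProbabilityMeasure (π i)] :
    α (⨅ ν ∈ mixSet π, transportCost c (∑ i, lam i • μc i) ν) ≤
      ∑ i, lam i * α (transportCost c (μc i) (π i)) :=
  alpha_transportCost_mixSet_le_general c α hα_mono hα_conv lam hlam μc π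
end

section
/- Gronwall-type metastability bound: let h : [0,∞) → [0,∞) be differentiable and g : [0,∞) → [0,∞) satisfy h'(t) ≤ −(1/C)h(t) + (1/C)g(t) for all t ≥ 0, with C > 0. Define δ(t) := sup_{s ≤ t} g(s) − g(t). Then h(t) − g(t) ≤ e^{−t/C} h(0) + δ(t) for all t ≥ 0. -/
/-!
On `[0, t]` the forcing `g` stays below `M = sup_{[0, t]} g`, so `h - M` obeys the linear
differential inequality `(h - M)' ≤ -(h - M) / C`. Grönwall's inequality then gives
`h t - M ≤ e^{-t/C} (h 0 - M)`, which is at most `e^{-t/C} h 0` because `M ≥ g 0 ≥ 0`.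
-/

open Set

theorem le_ciSup₂_of_bddAbove_image {α ι : Type*} [ConditionallyCompleteLattice α] {f : ι → α}
    {s : Set ι} (hf : BddAbove (f '' s)) {i : ι} (hi : i ∈ s) : f i ≤ ⨆ j ∈ s, f j :=
  le_ciSup₂ (f := fun j _ => f j)
    (hf.mono <| by rintro _ ⟨_, ⟨j, rfl⟩, ⟨hj, rfl⟩⟩; exact ⟨j, hj, rfl⟩) i hi

theorem le_mul_exp_of_deriv_right_le_mul {f f' : ℝ → ℝ} {K a b : ℝ}
    (hf : ContinuousOn f (Icc a b)) (hf' : ∀ x ∈ Ico a b, HasDerivWithinAt f (f' x) (Ici x) x)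
    (bound : ∀ x ∈ Ico a b, f' x ≤ K * f x) :
    ∀ x ∈ Icc a b, f x ≤ f a * Real.exp (K * (x - a)) := by
  intro x hx
  rw [← gronwallBound_ε0]
  exact le_gronwallBound_of_liminf_deriv_right_le hf
    (fun x hx _ hr => (hf' x hx).liminf_right_slope_le hr) le_rfl
    (fun x hx => by simpa using bound x hx) x hx

theorem gronwall_metastability_general
    (C : ℝ) (hC : 0 < C)
    (h g h' : ℝ → ℝ)
    (hg_nonneg : ∀ t, 0 ≤ t → 0 ≤ g t)
    (hg_bdd : ∀ t, 0 ≤ t → BddAbove (g '' Icc 0 t))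
    (hderiv : ∀ t, 0 ≤ t → HasDerivAt h (h' t) t)
    (hineq : ∀ t, 0 ≤ t → h' t ≤ -(1 / C) * h t + (1 / C) * g t)
    (t : ℝ) (ht : 0 ≤ t) :
    h t - g t ≤ Real.exp (-t / C) * h 0 + ((⨆ s ∈ Icc 0 t, g s) - g t) := by
  set M := ⨆ s ∈ Icc 0 t, g s
  have hg_le : ∀ s ∈ Icc 0 t, g s ≤ M := fun s hs => le_ciSup₂_of_bddAbove_image (hg_bdd t ht) hs
  have hM : 0 ≤ M := (hg_nonneg 0 le_rfl).trans (hg_le 0 ⟨le_rfl, ht⟩)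
  have relax : h t - M ≤ (h 0 - M) * Real.exp (-(1 / C) * (t - 0)) := by
    refine le_mul_exp_of_deriv_right_le_mul (f := fun s => h s - M) (f' := h')
      (fun s hs => ((hderiv s hs.1).sub_const M).continuousAt.continuousWithinAt)
      (fun s hs => ((hderiv s hs.1).sub_const M).hasDerivWithinAt)
      (fun s hs => ?_) t ⟨ht, le_rfl⟩
    have := mul_le_mul_of_nonneg_left (hg_le s (Ico_subset_Icc_self hs)) (one_div_pos.2 hC).le
    linarith [hineq s hs.1]
  have hexp : Real.exp (-(1 / C) * (t - 0)) = Real.exp (-t / C) := by ring_nf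
  rw [hexp] at relax
  have := mul_le_mul_of_nonneg_right (sub_le_self (h 0) hM) (Real.exp_pos (-t / C)).le
  linarith

/-- Gronwall-type metastability bound: if `h, g : [0, ∞) → [0, ∞)` with `h`
differentiable satisfying `h'(t) ≤ −(1/C) h(t) + (1/C) g(t)` for `t ≥ 0` and `C > 0`, and
`δ(t) := sup_{s ≤ t} g(s) − g(t)`, then `h(t) − g(t) ≤ e^{−t/C} h(0) + δ(t)` for all `t ≥ 0`. -/
theorem gronwall_metastability
    (C : ℝ) (hC : 0 < C)
    (h g h' : ℝ → ℝ)
    (hh_nonneg : ∀ t, 0 ≤ t → 0 ≤ h t)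
    (hg_nonneg : ∀ t, 0 ≤ t → 0 ≤ g t)
    (hg_bdd : ∀ t, 0 ≤ t → BddAbove (g '' Icc 0 t))
    (hderiv : ∀ t, 0 ≤ t → HasDerivAt h (h' t) t)
    (hineq : ∀ t, 0 ≤ t → h' t ≤ -(1 / C) * h t + (1 / C) * g t)
    (t : ℝ) (ht : 0 ≤ t) :
    h t - g t ≤ Real.exp (-t / C) * h 0 + ((⨆ s ∈ Icc 0 t, g s) - g t) :=
  gronwall_metastability_general C hC h g h' hg_nonneg hg_bdd hderiv hineq t ht
end

section
/- Reweighted total variation bound: if π = Σᵢ wᵢπᵢ with wᵢ > 0, each πᵢ satisfies a Poincaré inequality Var_{πᵢ}(g) ≤ C·Eᵢ(g,g), the Dirichlet form comparison Σᵢ wᵢEᵢ(f,f) ≤ E(f,f) holds, and each πᵢ satisfies ‖ν − πᵢ‖²_TV ≤ 4C·FI(ν‖πᵢ), then for every probability measure μ, inf_{π̃ ∈ C} ‖μ − π̃‖²_TV ≤ 4C·FI(μ‖π). -/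
open MeasureTheory ProbabilityTheory ENNReal Classical

/-- Total variation distance (total variation norm of the difference): for probability
measures, `‖μ − ν‖_TV = sup over measurable s of (μ(s) − ν(s)) + (ν(sᶜ) − μ(sᶜ))`. -/
noncomputable def tvDist {X : Type*} [MeasurableSpace X] (μ ν : Measure X) : ℝ≥0∞ :=
  ⨆ (s : Set X) (_ : MeasurableSet s), (μ s - ν s) + (ν sᶜ - μ sᶜ)

/-- Relative Fisher information associated with a Dirichlet form, given by the quadratic
functional `E(f) = E(f, f)` with domain `Dom`. -/
noncomputable def fisherInfo {X : Type*} [MeasurableSpace X]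
    (Dom : Set (X → ℝ)) (E : (X → ℝ) → ℝ≥0∞) (μ π : Measure X) : ℝ≥0∞ :=
  if μ ≪ π ∧ (fun x => Real.sqrt (μ.rnDeriv π x).toReal) ∈ Dom
  then E (fun x => Real.sqrt (μ.rnDeriv π x).toReal) else ∞

/-!
Let `h = dμ/dπ` and `Zᵢ = ∫ h dπᵢ`, so that `∑ wᵢ Zᵢ = μ(X) = 1` and `ν = ∑ wᵢ Zᵢ πᵢ ∈ C`.
Since `μ = ∑ wᵢ (h · πᵢ)`, we get `‖μ - ν‖_TV ≤ ∑ wᵢ ‖h - Zᵢ‖_{L¹(πᵢ)}`. With `f = √h` and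
`s = √Zᵢ`, `|h - Zᵢ| = |f - s| |f + s|`, and Cauchy–Schwarz in `L²(πᵢ)` gives
`‖h - Zᵢ‖²_{L¹(πᵢ)} ≤ 4 Zᵢ Var_{πᵢ}(f)`. Cauchy–Schwarz over `i`, using `∑ wᵢ Zᵢ = 1`, yields
`‖μ - ν‖²_TV ≤ 4 ∑ wᵢ Var_{πᵢ}(f)`, which the Poincaré inequalities and the comparison of
Dirichlet forms bound by `4 C E(f, f) = 4 C FI(μ‖π)`.
-/

theorem ENNReal.sum_sq_le_sum_mul_sum_of_sq_le_mul {ι : Type*} (s : Finset ι)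
    {r f g : ι → ℝ≥0∞} (h : ∀ i ∈ s, r i ^ 2 ≤ f i * g i) :
    (∑ i ∈ s, r i) ^ 2 ≤ (∑ i ∈ s, f i) * ∑ i ∈ s, g i := by
  have hsq (x : ℝ≥0∞) : (x ^ (1 / 2 : ℝ)) ^ (2 : ℝ) = x := by
    rw [← ENNReal.rpow_mul]; norm_num
  have hr : ∀ i ∈ s, r i ≤ f i ^ (1 / 2 : ℝ) * g i ^ (1 / 2 : ℝ) := fun i hi => by
    rw [← ENNReal.mul_rpow_of_nonneg _ _ (by norm_num), ← ENNReal.rpow_le_rpow_iff two_pos, hsq]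
    exact_mod_cast h i hi
  have hCS := ENNReal.inner_le_Lp_mul_Lq s (fun i => f i ^ (1 / 2 : ℝ))
    (fun i => g i ^ (1 / 2 : ℝ)) Real.HolderConjugate.two_two
  simp only [hsq] at hCS
  rw [← ENNReal.rpow_natCast, ← hsq ((∑ i ∈ s, f i) * ∑ i ∈ s, g i),
    ENNReal.mul_rpow_of_nonneg _ _ (by norm_num)]
  refine ENNReal.rpow_le_rpow ?_ two_pos.le
  exact (Finset.sum_le_sum hr).trans hCS

theorem integral_abs_mul_abs_sq_le {α : Type*} [MeasurableSpace α] {μ : Measure α} {u v : α → ℝ}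
    (hu : MemLp u 2 μ) (hv : MemLp v 2 μ) :
    (∫ x, |u x| * |v x| ∂μ) ^ 2 ≤ (∫ x, u x ^ 2 ∂μ) * ∫ x, v x ^ 2 ∂μ := by
  have hCS := integral_mul_le_Lp_mul_Lq_of_nonneg Real.HolderConjugate.two_two
    (Filter.Eventually.of_forall fun x => abs_nonneg (u x))
    (Filter.Eventually.of_forall fun x => abs_nonneg (v x))
    (by rw [ENNReal.ofReal_ofNat]; exact hu.abs) (by rw [ENNReal.ofReal_ofNat]; exact hv.abs)
  simp only [Real.rpow_two, sq_abs, ← Real.sqrt_eq_rpow] at hCS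
  calc _ ≤ (√(∫ x, u x ^ 2 ∂μ) * √(∫ x, v x ^ 2 ∂μ)) ^ 2 :=
        pow_le_pow_left₀ (integral_nonneg fun x => by positivity) hCS 2
    _ = _ := by
        rw [mul_pow, Real.sq_sqrt (integral_nonneg fun x => sq_nonneg _),
          Real.sq_sqrt (integral_nonneg fun x => sq_nonneg _)]

theorem ENNReal.tsub_add_tsub_eq_ofReal_abs {a b : ℝ≥0∞} (ha : a ≠ ∞) (hb : b ≠ ∞) :
    (a - b) + (b - a) = ENNReal.ofReal |a.toReal - b.toReal| := by
  rcases le_total a b with hab | hab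
  · rw [tsub_eq_zero_of_le hab, zero_add, abs_sub_comm, abs_of_nonneg
      (sub_nonneg.2 (ENNReal.toReal_mono hb hab)), ← ENNReal.toReal_sub_of_le hab hb,
      ENNReal.ofReal_toReal (ENNReal.sub_ne_top hb)]
  · rw [tsub_eq_zero_of_le hab, add_zero, abs_of_nonneg
      (sub_nonneg.2 (ENNReal.toReal_mono ha hab)), ← ENNReal.toReal_sub_of_le hab ha,
      ENNReal.ofReal_toReal (ENNReal.sub_ne_top ha)]

theorem Finset.sum_tsub_sum_le {ι M : Type*} [AddCommMonoid M] [PartialOrder M]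
    [IsOrderedAddMonoid M] [Sub M] [OrderedSub M] (s : Finset ι) (f g : ι → M) :
    ∑ i ∈ s, f i - ∑ i ∈ s, g i ≤ ∑ i ∈ s, (f i - g i) := by
  rw [tsub_le_iff_right, ← Finset.sum_add_distrib]
  exact Finset.sum_le_sum fun i _ => le_tsub_add

section Variance

variable {Ω : Type*} [MeasurableSpace Ω] {p : Measure Ω} [IsProbabilityMeasure p] {f : Ω → ℝ}

theorem integral_sub_const_sq_eq_variance_add (hf : MemLp f 2 p) (t : ℝ) :
    ∫ x, (f x - t) ^ 2 ∂p = variance f p + (∫ x, f x ∂p - t) ^ 2 := by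
  have hft : MemLp (fun x => f x - t) 2 p := hf.sub (memLp_const t)
  have := variance_eq_sub hft
  rw [variance_sub_const hf.aestronglyMeasurable, integral_sub (hf.integrable one_le_two)
    (integrable_const t), integral_const] at this
  simp only [Pi.pow_apply, probReal_univ, smul_eq_mul, one_mul] at this
  linarith

theorem sq_integral_abs_sq_sub_integral_sq_le (hf : MemLp f 2 p) :
    (∫ x, |f x ^ 2 - ∫ y, f y ^ 2 ∂p| ∂p) ^ 2 ≤ 4 * (∫ x, f x ^ 2 ∂p) * variance f p := by
  set c := ∫ y, f y ^ 2 ∂p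
  set s := √c
  have hs : s ^ 2 = c := Real.sq_sqrt (integral_nonneg fun x => sq_nonneg _)
  have hV : variance f p = c - (∫ x, f x ∂p) ^ 2 := by
    rw [variance_eq_sub hf]; rfl
  have hfactor : ∀ x, |f x ^ 2 - c| = |f x - s| * |f x + s| := fun x => by
    rw [← abs_mul, ← hs]; ring_nf
  calc (∫ x, |f x ^ 2 - c| ∂p) ^ 2 = (∫ x, |f x - s| * |f x + s| ∂p) ^ 2 := by
        simp only [hfactor]
    _ ≤ (∫ x, (f x - s) ^ 2 ∂p) * ∫ x, (f x + s) ^ 2 ∂p :=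
        integral_abs_mul_abs_sq_le (hf.sub (memLp_const s)) (hf.add (memLp_const s))
    -- `∫ (f ∓ s)² = Var f + (E f ∓ s)² = 2c ∓ 2s E f`, and `(2c)² - (2s E f)² = 4c Var f`
    _ = 4 * c * variance f p := by
        simp only [← sub_neg_eq_add, integral_sub_const_sq_eq_variance_add hf, hV, ← hs]
        ring

theorem sq_lintegral_tsub_add_tsub_le {h : Ω → ℝ≥0∞} (hh : AEMeasurable h p)
    (hZ : ∫⁻ x, h x ∂p ≠ ∞) :
    (∫⁻ x, (h x - ∫⁻ y, h y ∂p) + (∫⁻ y, h y ∂p - h x) ∂p) ^ 2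
      ≤ 4 * (∫⁻ x, h x ∂p) * evariance (fun x => √(h x).toReal) p := by
  set Z := ∫⁻ y, h y ∂p
  set f : Ω → ℝ := fun x => √(h x).toReal
  have hf_sq : ∀ x, f x ^ 2 = (h x).toReal := fun x => Real.sq_sqrt ENNReal.toReal_nonneg
  have hf_int : Integrable (fun x => f x ^ 2) p := by
    simpa only [hf_sq] using integrable_toReal_of_lintegral_ne_top hh hZ
  have hf : MemLp f 2 p :=
    (memLp_two_iff_integrable_sq (by fun_prop)).2 hf_int
  have hZf : ∫ x, f x ^ 2 ∂p = Z.toReal := by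
    simp only [hf_sq]; exact integral_toReal hh (ae_lt_top' hh hZ)
  have hL1 : ∫⁻ x, (h x - Z) + (Z - h x) ∂p
      = ENNReal.ofReal (∫ x, |f x ^ 2 - ∫ y, f y ^ 2 ∂p| ∂p) := by
    have hint : Integrable (fun x => |f x ^ 2 - Z.toReal|) p :=
      (hf_int.sub (integrable_const _)).abs
    rw [hZf, ofReal_integral_eq_lintegral_ofReal hint
      (Filter.Eventually.of_forall fun x => abs_nonneg _)]
    refine lintegral_congr_ae ((ae_lt_top' hh hZ).mono fun x hx => ?_)
    simp only [hf_sq, ENNReal.tsub_add_tsub_eq_ofReal_abs hx.ne hZ]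
  rw [hL1, ← ENNReal.ofReal_pow (integral_nonneg fun x => abs_nonneg _), ← hf.ofReal_variance_eq,
    ← ENNReal.ofReal_toReal hZ, ← hZf, ← ENNReal.ofReal_ofNat 4, ← ENNReal.ofReal_mul (by norm_num),
    ← ENNReal.ofReal_mul (by positivity)]
  exact ENNReal.ofReal_le_ofReal (sq_integral_abs_sq_sub_integral_sq_le hf)

end Variance

section TotalVariation

variable {X : Type*} [MeasurableSpace X]

theorem tvDist_finset_sum_le {ι : Type*} (s : Finset ι) (μ ν : ι → Measure X) :
    tvDist (∑ i ∈ s, μ i) (∑ i ∈ s, ν i) ≤ ∑ i ∈ s, tvDist (μ i) (ν i) := by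
  refine iSup₂_le fun t ht => ?_
  simp only [Measure.finsetSum_apply]
  calc _ ≤ (∑ i ∈ s, (μ i t - ν i t)) + ∑ i ∈ s, (ν i tᶜ - μ i tᶜ) :=
        add_le_add (Finset.sum_tsub_sum_le _ _ _) (Finset.sum_tsub_sum_le _ _ _)
    _ = ∑ i ∈ s, ((μ i t - ν i t) + (ν i tᶜ - μ i tᶜ)) := Finset.sum_add_distrib.symm
    _ ≤ _ := Finset.sum_le_sum fun i _ =>
        le_iSup₂ (f := fun t (_ : MeasurableSet t) => (μ i t - ν i t) + (ν i tᶜ - μ i tᶜ)) t ht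

theorem tvDist_smul_le (c : ℝ≥0∞) (μ ν : Measure X) :
    tvDist (c • μ) (c • ν) ≤ c * tvDist μ ν := by
  refine iSup₂_le fun t ht => ?_
  simp only [Measure.smul_apply, smul_eq_mul]
  calc _ ≤ c * (μ t - ν t) + c * (ν tᶜ - μ tᶜ) :=
        add_le_add le_mul_tsub le_mul_tsub
    _ ≤ _ := by
        rw [← mul_add]
        exact mul_le_mul_right (le_iSup₂
          (f := fun t (_ : MeasurableSet t) => (μ t - ν t) + (ν tᶜ - μ tᶜ)) t ht) c

theorem tvDist_withDensity_le (ρ : Measure X) {g k : X → ℝ≥0∞} (hg : AEMeasurable g ρ)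
    (hk : AEMeasurable k ρ) :
    tvDist (ρ.withDensity g) (ρ.withDensity k) ≤ ∫⁻ x, (g x - k x) + (k x - g x) ∂ρ := by
  refine iSup₂_le fun t ht => ?_
  rw [withDensity_apply _ ht, withDensity_apply _ ht, withDensity_apply _ ht.compl,
    withDensity_apply _ ht.compl, ← lintegral_add_compl (fun x => (g x - k x) + (k x - g x)) ht]
  exact add_le_add
    ((lintegral_sub_le' _ _ hk.restrict).trans (lintegral_mono fun x => le_self_add))
    ((lintegral_sub_le' _ _ hg.restrict).trans (lintegral_mono fun x => le_add_self))

theorem withDensity_finsetSum_measure {ι : Type*} (s : Finset ι) (μ : ι → Measure X)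
    (f : X → ℝ≥0∞) : (∑ i ∈ s, μ i).withDensity f = ∑ i ∈ s, (μ i).withDensity f := by
  induction s using Finset.cons_induction with
  | empty => simp
  | cons i s hi ih => rw [Finset.sum_cons, Finset.sum_cons, withDensity_add_measure, ih]

theorem tvDist_withDensity_mixture_le {ι : Type*} (s : Finset ι) (w c : ι → ℝ≥0∞)
    (π : ι → Measure X) {h : X → ℝ≥0∞} (hh : Measurable h) :
    tvDist ((∑ i ∈ s, w i • π i).withDensity h) (∑ i ∈ s, (w i * c i) • π i)
      ≤ ∑ i ∈ s, w i * ∫⁻ x, (h x - c i) + (c i - h x) ∂π i := by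
  have hc : ∀ i, (w i * c i) • π i = w i • (π i).withDensity (fun _ => c i) := fun i => by
    rw [withDensity_const, smul_smul]
  simp only [withDensity_finsetSum_measure, withDensity_smul_measure, hc]
  exact (tvDist_finset_sum_le _ _ _).trans (Finset.sum_le_sum fun i _ =>
    (tvDist_smul_le _ _ _).trans (mul_le_mul_right
      (tvDist_withDensity_le _ hh.aemeasurable aemeasurable_const) _))

theorem isProbabilityMeasure_finsetSum_smul {ι : Type*} (s : Finset ι) (w : ι → ℝ≥0∞)
    (μ : ι → Measure X) [∀ i, IsProbabilityMeasure (μ i)] (hw : ∑ i ∈ s, w i = 1) :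
    IsProbabilityMeasure (∑ i ∈ s, w i • μ i) :=
  ⟨by simp [Measure.finsetSum_apply, hw]⟩

theorem single_mem_mixSet {m : ℕ} (π : Fin m → Measure X) (i : Fin m) : π i ∈ mixSet π :=
  ⟨Pi.single i 1, by simp, by simp [Pi.single_apply]⟩

theorem exists_mem_mixSet_tvDist_sq_le {m : ℕ} (w : Fin m → ℝ≥0∞) (π : Fin m → Measure X)
    [∀ i, IsProbabilityMeasure (π i)] (hw : ∀ i, w i ≠ 0) (μ : Measure X) [IsProbabilityMeasure μ]
    [SigmaFinite (∑ i, w i • π i)] (hμ : μ ≪ ∑ i, w i • π i) :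
    ∃ ν ∈ mixSet π, tvDist μ ν ^ 2 ≤
      4 * ∑ i, w i * evariance (fun x => √(μ.rnDeriv (∑ i, w i • π i) x).toReal) (π i) := by
  set h := μ.rnDeriv (∑ i, w i • π i)
  set Z : Fin m → ℝ≥0∞ := fun i => ∫⁻ x, h x ∂π i
  have hZ : ∑ i, w i * Z i = 1 := by
    rw [← measure_univ (μ := μ), ← Measure.lintegral_rnDeriv hμ, lintegral_finsetSum_measure]
    simp only [lintegral_smul_measure, smul_eq_mul, Z, h]
  have hZ_ne_top (i : Fin m) : Z i ≠ ∞ := by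
    intro hi
    have := hZ ▸ Finset.single_le_sum (f := fun j => w j * Z j) (fun j _ => zero_le)
      (Finset.mem_univ i)
    simp [hi, ENNReal.mul_top (hw i)] at this
  refine ⟨∑ i, (w i * Z i) • π i, ⟨_, hZ, rfl⟩, ?_⟩
  have htv : tvDist μ (∑ i, (w i * Z i) • π i)
      ≤ ∑ i, w i * ∫⁻ x, (h x - Z i) + (Z i - h x) ∂π i := by
    conv_lhs => rw [← Measure.withDensity_rnDeriv_eq μ _ hμ]
    exact tvDist_withDensity_mixture_le _ _ _ _ (Measure.measurable_rnDeriv _ _)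
  calc _ ≤ (∑ i, w i * ∫⁻ x, (h x - Z i) + (Z i - h x) ∂π i) ^ 2 := by gcongr
    _ ≤ (∑ i, w i * Z i) * ∑ i, w i * (4 * evariance (fun x => √(h x).toReal) (π i)) := by
        refine ENNReal.sum_sq_le_sum_mul_sum_of_sq_le_mul _ fun i _ => ?_
        calc _ = w i ^ 2 * (∫⁻ x, (h x - Z i) + (Z i - h x) ∂π i) ^ 2 := mul_pow _ _ _
          _ ≤ w i ^ 2 * (4 * Z i * evariance (fun x => √(h x).toReal) (π i)) := by
              gcongr
              exact sq_lintegral_tsub_add_tsub_le (Measure.measurable_rnDeriv _ _).aemeasurable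
                (hZ_ne_top i)
          _ = _ := by ring
    _ = _ := by rw [hZ, one_mul, Finset.mul_sum]; simp only [mul_left_comm]

end TotalVariation

theorem reweighted_tv_bound_general
    {X : Type*} [MeasurableSpace X]
    {m : ℕ} (w : Fin m → ℝ≥0∞) (π : Fin m → Measure X) (πmix : Measure X)
    [∀ i, IsProbabilityMeasure (π i)]
    (hw_pos : ∀ i, 0 < w i) (hw_sum : ∑ i, w i = 1)
    (hmix : πmix = ∑ i, w i • π i)
    (Dom : Set (X → ℝ)) (E : (X → ℝ) → ℝ≥0∞)
    (Domi : Fin m → Set (X → ℝ)) (Ei : Fin m → (X → ℝ) → ℝ≥0∞)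
    (hdom : ∀ f ∈ Dom, ∀ i, f ∈ Domi i)
    (hcomp : ∀ f ∈ Dom, ∑ i, w i * Ei i f ≤ E f)
    (C : ℝ≥0∞)
    -- Poincaré inequality for each component
    (hPoincare : ∀ i, ∀ g ∈ Domi i, evariance g (π i) ≤ C * Ei i g)
    -- transport-information (TV) inequality for each component
    (hTVI : ∀ i, ∀ ν : Measure X, IsProbabilityMeasure ν →
      tvDist ν (π i) ^ 2 ≤ 4 * C * fisherInfo (Domi i) (Ei i) ν (π i))
    (μ : Measure X) [IsProbabilityMeasure μ] :
    (⨅ ν ∈ mixSet π, tvDist μ ν ^ 2) ≤ 4 * C * fisherInfo Dom E μ πmix := by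
  rcases eq_or_ne C 0 with rfl | hC
  · -- the bound reads `0` here even where `fisherInfo` is `∞`, since `0 * ∞ = 0`
    obtain ⟨i⟩ : Nonempty (Fin m) :=
      Finset.univ_nonempty_iff.1 (Finset.nonempty_of_sum_ne_zero (f := w) (by simp [hw_sum]))
    exact (iInf₂_le _ (single_mem_mixSet π i)).trans (by simpa using hTVI i μ ‹_›)
  subst hmix
  have := isProbabilityMeasure_finsetSum_smul Finset.univ w π hw_sum
  unfold fisherInfo
  split_ifs with hFI
  swap
  · simp [ENNReal.mul_top, hC]
  obtain ⟨hμ, hDom⟩ := hFI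
  set f := fun x => √(μ.rnDeriv (∑ i, w i • π i) x).toReal
  obtain ⟨ν, hν, htv⟩ := exists_mem_mixSet_tvDist_sq_le w π (fun i => (hw_pos i).ne') μ hμ
  calc _ ≤ tvDist μ ν ^ 2 := iInf₂_le ν hν
    _ ≤ _ := htv
    _ ≤ 4 * ∑ i, w i * (C * Ei i f) := by
        gcongr with i
        exact hPoincare i f (hdom f hDom i)
    _ = 4 * C * ∑ i, w i * Ei i f := by
        simp only [Finset.mul_sum]
        exact Finset.sum_congr rfl fun i _ => by ring
    _ ≤ _ := by gcongr; exact hcomp f hDom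

/-- Reweighted total variation bound: if `π = ∑ i, wᵢ πᵢ` with positive
weights, each `πᵢ` satisfies a Poincaré inequality `Var_{πᵢ}(g) ≤ C · Eᵢ(g, g)`, the
Dirichlet form comparison `∑ i, wᵢ Eᵢ(f, f) ≤ E(f, f)` holds, and each `πᵢ` satisfies
`‖ν − πᵢ‖²_TV ≤ 4C · FI(ν‖πᵢ)`, then for every probability measure `μ`,
`inf_{π̃ ∈ C} ‖μ − π̃‖²_TV ≤ 4C · FI(μ‖π)`. -/
theorem reweighted_tv_bound
    {X : Type*} [MeasurableSpace X] [TopologicalSpace X] [PolishSpace X] [BorelSpace X]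
    {m : ℕ} (w : Fin m → ℝ≥0∞) (π : Fin m → Measure X) (πmix : Measure X)
    [∀ i, IsProbabilityMeasure (π i)]
    (hw_pos : ∀ i, 0 < w i) (hw_sum : ∑ i, w i = 1)
    (hmix : πmix = ∑ i, w i • π i)
    (Dom : Set (X → ℝ)) (E : (X → ℝ) → ℝ≥0∞)
    (Domi : Fin m → Set (X → ℝ)) (Ei : Fin m → (X → ℝ) → ℝ≥0∞)
    (hdom : ∀ f ∈ Dom, ∀ i, f ∈ Domi i)
    (hcomp : ∀ f ∈ Dom, ∑ i, w i * Ei i f ≤ E f)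
    (C : ℝ≥0∞)
    -- Poincaré inequality for each component
    (hPoincare : ∀ i, ∀ g ∈ Domi i, evariance g (π i) ≤ C * Ei i g)
    -- transport-information (TV) inequality for each component
    (hTVI : ∀ i, ∀ ν : Measure X, IsProbabilityMeasure ν →
      tvDist ν (π i) ^ 2 ≤ 4 * C * fisherInfo (Domi i) (Ei i) ν (π i))
    (μ : Measure X) [IsProbabilityMeasure μ] :
    (⨅ ν ∈ mixSet π, tvDist μ ν ^ 2) ≤ 4 * C * fisherInfo Dom E μ πmix :=
  reweighted_tv_bound_general w π πmix hw_pos hw_sum hmix Dom E Domi Ei hdom hcomp C hPoincare hTVI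
    μ
end

section
/- Finite-state chain rule for relative entropy of mixtures: let p, q₁,…,qₘ be probability mass functions on a finite set S, q = Σᵢ wᵢ qᵢ with wᵢ > 0, Σwᵢ = 1, and p(x) = 0 whenever q(x) = 0. Define λ*ᵢ := wᵢ Σ_x (p(x)/q(x)) qᵢ(x) and, for λ*ᵢ > 0, pᵢ(x) := (wᵢ/λ*ᵢ)(p(x)/q(x)) qᵢ(x). Then KL(p‖q) = Σᵢ λ*ᵢ log(λ*ᵢ/wᵢ) + Σᵢ λ*ᵢ KL(pᵢ‖qᵢ). -/
/-- Relative entropy of probability mass functions on a finite set, with the convention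
`0 · log 0 = 0` (terms with `p x = 0` vanish since they are multiplied by `p x`). -/
noncomputable def klFin {S : Type*} [Fintype S] (p q : S → ℝ) : ℝ :=
  ∑ x, p x * Real.log (p x / q x)

/-- Finite-state chain rule for relative entropy of mixtures:
`KL(p‖q) = ∑ i, λ*ᵢ log(λ*ᵢ/wᵢ) + ∑ i, λ*ᵢ KL(pᵢ‖qᵢ)`, where `q = ∑ i, wᵢ qᵢ`,
`p ≪ q`, `λ*ᵢ := wᵢ ∑_x (p x / q x) qᵢ x`, and `pᵢ x := (wᵢ/λ*ᵢ)(p x / q x) qᵢ x`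
for `λ*ᵢ > 0` (with `pᵢ := qᵢ` when `λ*ᵢ = 0`). -/
theorem klFin_chain_rule
    {S : Type*} [Fintype S] {m : ℕ}
    (p : S → ℝ) (q : Fin m → S → ℝ) (qmix : S → ℝ) (w : Fin m → ℝ)
    (hp_nonneg : ∀ x, 0 ≤ p x) (hp_sum : ∑ x, p x = 1)
    (hq_nonneg : ∀ i x, 0 ≤ q i x) (hq_sum : ∀ i, ∑ x, q i x = 1)
    (hw_pos : ∀ i, 0 < w i) (hw_sum : ∑ i, w i = 1)
    (hmix : ∀ x, qmix x = ∑ i, w i * q i x)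
    (hac : ∀ x, qmix x = 0 → p x = 0)
    (lam : Fin m → ℝ)
    (hlam : ∀ i, lam i = w i * ∑ x, (p x / qmix x) * q i x)
    (pc : Fin m → S → ℝ)
    (hpc : ∀ i x, pc i x =
      if lam i = 0 then q i x else (w i / lam i) * (p x / qmix x) * q i x) :
    klFin p qmix =
      (∑ i, lam i * Real.log (lam i / w i)) + ∑ i, lam i * klFin (pc i) (q i) := by
  classical
  have hqmix_nonneg : ∀ x, 0 ≤ qmix x := fun x => by
    rw [hmix]
    exact Finset.sum_nonneg fun i _ => mul_nonneg (hw_pos i).le (hq_nonneg i x)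
  set f : Fin m → S → ℝ := fun i x => w i * (p x / qmix x) * q i x with hf
  have hf_nonneg : ∀ i x, 0 ≤ f i x := fun i x =>
    mul_nonneg (mul_nonneg (hw_pos i).le (div_nonneg (hp_nonneg x) (hqmix_nonneg x)))
      (hq_nonneg i x)
  have hA : ∀ x, ∑ i, f i x = p x := by
    intro x
    by_cases h : qmix x = 0
    · have hp0 : p x = 0 := hac x h
      simp [hf, hp0]
    · have h1 : ∑ i, f i x = (p x / qmix x) * ∑ i, w i * q i x := by
        rw [Finset.mul_sum]
        exact Finset.sum_congr rfl fun i _ => by simp only [hf]; ring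
      rw [h1, ← hmix x, div_mul_cancel₀ _ h]
  have hB : ∀ i, lam i = ∑ x, f i x := by
    intro i
    rw [hlam, Finset.mul_sum]
    exact Finset.sum_congr rfl fun x _ => by simp only [hf]; ring
  have hlam_nonneg : ∀ i, 0 ≤ lam i := fun i =>
    (hB i) ▸ Finset.sum_nonneg fun x _ => hf_nonneg i x
  have key : ∀ i, lam i * Real.log (lam i / w i) + lam i * klFin (pc i) (q i)
      = ∑ x, f i x * Real.log (p x / qmix x) := by
    intro i
    rcases eq_or_lt_of_le (hlam_nonneg i) with h0 | hpos
    · have hall : ∀ x ∈ (Finset.univ : Finset S), f i x = 0 :=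
        (Finset.sum_eq_zero_iff_of_nonneg fun x _ => hf_nonneg i x).mp
          (by rw [← hB i, ← h0])
      rw [← h0, zero_mul, zero_mul, add_zero]
      exact (Finset.sum_eq_zero fun x hx => by rw [hall x hx, zero_mul]).symm
    · have hlne : lam i ≠ 0 := ne_of_gt hpos
      have hterm : ∀ x, lam i * (pc i x * Real.log (pc i x / q i x))
          = f i x * (Real.log (w i / lam i) + Real.log (p x / qmix x)) := by
        intro x
        have hpc' : pc i x = (w i / lam i) * (p x / qmix x) * q i x := by
          rw [hpc i x, if_neg hlne]
        by_cases hz : f i x = 0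
        · have hab : (p x / qmix x) * q i x = 0 := by
            have hz' : w i * ((p x / qmix x) * q i x) = 0 := by
              simp only [hf] at hz; rw [← mul_assoc]; exact hz
            rcases mul_eq_zero.mp hz' with h | h
            · exact absurd h (ne_of_gt (hw_pos i))
            · exact h
          have hpc0 : pc i x = 0 := by rw [hpc', mul_assoc, hab, mul_zero]
          rw [hpc0, hz]; ring
        · have hwq : w i ≠ 0 := ne_of_gt (hw_pos i)
          have hfpos := lt_of_le_of_ne (hf_nonneg i x) (Ne.symm hz)
          have hdne : p x / qmix x ≠ 0 := by
            intro h; apply hz; simp only [hf, h]; ring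
          have hqne : q i x ≠ 0 := by
            intro h; apply hz; simp only [hf, h]; ring
          have hratio : pc i x / q i x = (w i / lam i) * (p x / qmix x) := by
            rw [hpc', mul_div_assoc, div_self hqne, mul_one]
          have h1 : lam i * (w i / lam i) = w i := by field_simp
          have hlampc : lam i * pc i x = f i x := by
            rw [hpc']; simp only [hf]; rw [← mul_assoc, ← mul_assoc, h1]
          rw [hratio, Real.log_mul (div_ne_zero hwq hlne) hdne, ← mul_assoc, hlampc]
        
      have hsum : lam i * klFin (pc i) (q i)
          = ∑ x, f i x * (Real.log (w i / lam i) + Real.log (p x / qmix x)) := by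
        rw [klFin, Finset.mul_sum]
        exact Finset.sum_congr rfl fun x _ => hterm x
      have hsplit : ∑ x, f i x * (Real.log (w i / lam i) + Real.log (p x / qmix x))
          = lam i * Real.log (w i / lam i) + ∑ x, f i x * Real.log (p x / qmix x) := by
        rw [hB i, Finset.sum_mul, ← Finset.sum_add_distrib]
        exact Finset.sum_congr rfl fun x _ => by ring
      rw [hsum, hsplit, ← add_assoc]
      have : lam i * Real.log (lam i / w i) + lam i * Real.log (w i / lam i) = 0 := by
        rw [Real.log_div hlne (ne_of_gt (hw_pos i)),
          Real.log_div (ne_of_gt (hw_pos i)) hlne]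
        ring
      rw [this, zero_add]
  rw [← Finset.sum_add_distrib]
  rw [Finset.sum_congr rfl fun i _ => key i]
  rw [Finset.sum_comm]
  rw [klFin]
  exact Finset.sum_congr rfl fun x _ => by rw [← Finset.sum_mul, hA x]
end
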